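/- arXiv:2002.01070 — 5 statements merged into one kernel-verified Lean document; each statement's English description precedes it below -/
import Mathlib

section
/- For any permutation π with symmetric distances, L(π) = W(π_1, π_n, π_{n−1}, …, π_2) − Σ_{i=1}^{n-1} d(π_i, π_{i+1}) − d(π_1, π_n), where the second permutation is π shifted to start at π_1 and then reversed. -/
/-!
Both sides are weighted sums over the edges of `π`. The tour `σ` runs through the path
`π 1, …, π (n-1)` backwards, so by symmetry of `d` its edge `(π k, π (k+1))` sits at position
`n - k - 1` of `σ` and gets weight `n - k` in `W(σ)`; the edge `(π 0, π 1)` is the closing edge of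
`σ`, of weight `n`, and `σ` adds one edge `(π 0, π (n-1))` of weight `1`. In `L(π)` the same edge
`(π k, π (k+1))` has weight `n - k - 1`, one less.
-/

open Finset

/-- Weighted TSP cost of the tour `π 0, π 1, …, π (n-1)` with node weights `w`. -/
noncomputable def wCost (n : ℕ) (d : Fin n → Fin n → ℝ) (w : Fin n → ℝ) (π : ℕ → Fin n) : ℝ :=
  d (π (n - 1)) (π 0) * (∑ j ∈ Finset.range n, w (π j)) +
    ∑ i ∈ Finset.range (n - 1), d (π i) (π (i + 1)) * (∑ j ∈ Finset.range (i + 1), w (π j))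

/-- 1-weighted TSP cost (all node weights equal to 1). -/
noncomputable def w1Cost (n : ℕ) (d : Fin n → Fin n → ℝ) (π : ℕ → Fin n) : ℝ :=
  (n : ℝ) * d (π (n - 1)) (π 0) +
    ∑ i ∈ Finset.range (n - 1), ((i : ℝ) + 1) * d (π i) (π (i + 1))

/-- Latency of the tour `π`. -/
noncomputable def latency (n : ℕ) (d : Fin n → Fin n → ℝ) (π : ℕ → Fin n) : ℝ :=
  ∑ i ∈ Finset.range (n - 1), ((n - (i + 1) : ℕ) : ℝ) * d (π i) (π (i + 1))

/-- `π` visits each of the `n` cities exactly once. -/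
def IsTour (n : ℕ) (π : ℕ → Fin n) : Prop :=
  Function.Bijective fun i : Fin n => π i.val

/-- Classical TSP tour length. -/
noncomputable def tspCost (n : ℕ) (d : Fin n → Fin n → ℝ) (π : ℕ → Fin n) : ℝ :=
  d (π (n - 1)) (π 0) + ∑ i ∈ Finset.range (n - 1), d (π i) (π (i + 1))

/-- Distance of the edge at (0-indexed) position `i` of the tour, position `n-1` being the closing edge. -/
noncomputable def edgeDist (n : ℕ) (d : Fin n → Fin n → ℝ) (π : ℕ → Fin n) (i : ℕ) : ℝ :=
  if i = n - 1 then d (π (n - 1)) (π 0) else d (π i) (π (i + 1))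

open Classical in
/-- Number of edges of distance 2 in the tour `π`. -/
noncomputable def numTwoEdges (n : ℕ) (d : Fin n → Fin n → ℝ) (π : ℕ → Fin n) : ℕ :=
  ((Finset.range n).filter fun i => edgeDist n d π i = 2).card


theorem sum_range_mul_dist_reverse {α : Type*} (d : α → α → ℝ) (hsym : ∀ x y, d x y = d y x)
    (c : ℕ → ℝ) (m : ℕ) (p q : ℕ → α) (hq : ∀ i ≤ m, q i = p (m - i)) :
    ∑ i ∈ range m, c i * d (q i) (q (i + 1)) =
      ∑ i ∈ range m, c (m - 1 - i) * d (p i) (p (i + 1)) := by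
  rw [← sum_range_reflect]
  refine sum_congr rfl fun i hi => ?_
  have hi : i < m := mem_range.mp hi
  rw [hq _ (by omega), hq _ (by omega), hsym]
  congr 3 <;> omega

theorem latency_eq_sum_sub (n : ℕ) (d : Fin n → Fin n → ℝ) (π : ℕ → Fin n) :
    latency n d π = ∑ i ∈ range (n - 1), ((n : ℝ) - i) * d (π i) (π (i + 1)) -
      ∑ i ∈ range (n - 1), d (π i) (π (i + 1)) := by
  rw [latency, ← sum_sub_distrib]
  refine sum_congr rfl fun i hi => ?_
  rw [Nat.cast_sub (by have := mem_range.mp hi; omega)]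
  push_cast
  ring

theorem w1Cost_eq_of_rotate_reverse (n : ℕ) (hn : 2 ≤ n) (d : Fin n → Fin n → ℝ)
    (hsym : ∀ i j, d i j = d j i) (π σ : ℕ → Fin n)
    (hσ : ∀ j, σ j = if j = 0 then π 0 else π (n - j)) :
    w1Cost n d σ = d (π 0) (π (n - 1)) +
      ∑ i ∈ range (n - 1), ((n : ℝ) - i) * d (π i) (π (i + 1)) := by
  obtain ⟨m, rfl⟩ : ∃ m, n = m + 2 := ⟨n - 2, by omega⟩
  have hσ_zero : σ 0 = π 0 := by simp [hσ]
  have hσ_succ (j : ℕ) : σ (j + 1) = π (m + 2 - (j + 1)) := by simp [hσ]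
  have hreverse := sum_range_mul_dist_reverse d hsym (fun i => (i : ℝ) + 1 + 1) m
    (fun k => π (k + 1)) (fun j => σ (j + 1)) fun i hi => by rw [hσ_succ]; congr 1; omega
  have hweights : ∑ i ∈ range m, ((m - 1 - i : ℕ) + 1 + 1 : ℝ) * d (π (i + 1)) (π (i + 1 + 1)) =
      ∑ i ∈ range m, ((m + 2 : ℕ) - (i + 1 : ℕ) : ℝ) * d (π (i + 1)) (π (i + 1 + 1)) := by
    refine sum_congr rfl fun i hi => ?_
    have hi : i < m := mem_range.mp hi
    rw [Nat.cast_sub (by omega), Nat.cast_sub (by omega)]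
    push_cast
    ring
  simp only [w1Cost, show m + 2 - 1 = m + 1 from rfl, sum_range_succ']
  push_cast at hreverse hweights ⊢
  rw [hreverse, hweights, hσ_succ, hσ_zero, show m + 2 - (m + 1) = 1 by omega, hsym (π 1),
    show σ 1 = π (m + 1) from hσ_succ 0]
  ring

theorem stmt2_general (n : ℕ) (hn : 2 ≤ n) (d : Fin n → Fin n → ℝ)
    (hsym : ∀ i j, d i j = d j i)
    (π : ℕ → Fin n)
    (σ : ℕ → Fin n) (hσ : ∀ j, σ j = if j = 0 then π 0 else π (n - j)) :
    latency n d π =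
      w1Cost n d σ - (∑ i ∈ Finset.range (n - 1), d (π i) (π (i + 1)))
        - d (π 0) (π (n - 1)) := by
  rw [latency_eq_sum_sub, w1Cost_eq_of_rotate_reverse n hn d hsym π σ hσ]
  ring

/-- `L(π) = W(π_1, π_n, …, π_2) − Σ_{i=1}^{n-1} d(π_i,π_{i+1}) − d(π_1,π_n)`
for symmetric distances, where the second permutation starts at π_1 and then visits the
remaining cities of π in reverse order. -/
theorem stmt2 (n : ℕ) (hn : 2 ≤ n) (d : Fin n → Fin n → ℝ)
    (hsym : ∀ i j, d i j = d j i)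
    (π : ℕ → Fin n) (hπ : IsTour n π)
    (σ : ℕ → Fin n) (hσ : ∀ j, σ j = if j = 0 then π 0 else π (n - j)) :
    latency n d π =
      w1Cost n d σ - (∑ i ∈ Finset.range (n - 1), d (π i) (π (i + 1)))
        - d (π 0) (π (n - 1)) :=
  stmt2_general n hn d hsym π σ hσ
end

section
/- Let π be a tour and π' = (π_1, π_n, …, π_2) its reversal (starting at the same city). For {1,2}-distances, each edge that contributes position weight r ∈ {1,…,n} in π contributes position weight n−r+1 in π'. Consequently, W(π) + W(π') = n(n+1) + k(n+1) whenever π has exactly k edges of distance 2, where n(n+1) accounts for the base 1-distance contributions of both tours. -/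
/-!
Reversing a tour while keeping its start city moves the edge at position `i` to position
`n - 1 - i` (distances being symmetric), so every edge gets position weights `i + 1` and `n - i`
in the two tours, which add up to `n + 1`. Hence `W(π) + W(π') = (n + 1) · L(π)` for the tour
length `L`, and with `{1,2}`-distances `L(π)` is `n` plus the number of edges of length 2.
-/

open Finset

/-- The reversal `π' = (π_1, π_n, …, π_2)`, written 0-indexed. -/
def tourReverse (n : ℕ) (π : ℕ → Fin n) (j : ℕ) : Fin n :=
  if j = 0 then π 0 else π (n - j)

theorem Finset.sum_eq_card_add_card_filter_eq_two {ι R : Type*} [AddCommMonoidWithOne R]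
    [CharZero R] (s : Finset ι) (f : ι → R) [DecidablePred fun i => f i = 2]
    (hf : ∀ i ∈ s, f i = 1 ∨ f i = 2) :
    ∑ i ∈ s, f i = #s + #(s.filter fun i => f i = 2) := by
  have hsplit : ∀ i ∈ s, f i = 1 + if f i = 2 then 1 else 0 := by
    intro i hi
    rcases hf i hi with h | h <;> simp [h, one_add_one_eq_two]
  rw [sum_congr rfl hsplit, sum_add_distrib, sum_boole]
  simp

section Tour

variable {n : ℕ} {d : Fin n → Fin n → ℝ}

theorem w1Cost_eq_sum_edgeDist (π : ℕ → Fin n) :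
    w1Cost n d π = ∑ i ∈ range n, ((i : ℝ) + 1) * edgeDist n d π i := by
  cases n with
  | zero => simp [w1Cost]
  | succ m =>
    rw [sum_range_succ, w1Cost, Nat.add_sub_cancel, add_comm]
    congr 1
    · refine sum_congr rfl fun i hi => ?_
      rw [edgeDist, Nat.add_sub_cancel, if_neg (mem_range.mp hi).ne]
    · simp [edgeDist]

theorem tspCost_eq_sum_edgeDist (π : ℕ → Fin n) :
    tspCost n d π = ∑ i ∈ range n, edgeDist n d π i := by
  obtain ⟨m, rfl⟩ := Nat.exists_eq_add_one_of_ne_zero (π 0).pos.ne'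
  rw [sum_range_succ, tspCost, Nat.add_sub_cancel, add_comm]
  congr 1
  · refine sum_congr rfl fun i hi => ?_
    rw [edgeDist, Nat.add_sub_cancel, if_neg (mem_range.mp hi).ne]
  · simp [edgeDist]

theorem edgeDist_tourReverse (hsym : ∀ i j, d i j = d j i) (π : ℕ → Fin n) {i : ℕ} (hi : i < n) :
    edgeDist n d (tourReverse n π) (n - 1 - i) = edgeDist n d π i := by
  unfold edgeDist tourReverse
  split_ifs <;> grind

theorem edgeDist_eq_one_or_two (h12 : ∀ i j, d i j = 1 ∨ d i j = 2) (π : ℕ → Fin n) (i : ℕ) :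
    edgeDist n d π i = 1 ∨ edgeDist n d π i = 2 := by
  unfold edgeDist
  split_ifs <;> exact h12 _ _

theorem tspCost_eq_add_numTwoEdges (h12 : ∀ i j, d i j = 1 ∨ d i j = 2) (π : ℕ → Fin n) :
    tspCost n d π = n + numTwoEdges n d π := by
  classical
  rw [tspCost_eq_sum_edgeDist, numTwoEdges,
    sum_eq_card_add_card_filter_eq_two _ _ fun i _ => edgeDist_eq_one_or_two h12 π i, card_range]

theorem w1Cost_add_w1Cost_tourReverse (hsym : ∀ i j, d i j = d j i) (π : ℕ → Fin n) :
    w1Cost n d π + w1Cost n d (tourReverse n π) = (n + 1) * tspCost n d π := by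
  have hrev : w1Cost n d (tourReverse n π) = ∑ i ∈ range n, ((n : ℝ) - i) * edgeDist n d π i := by
    rw [w1Cost_eq_sum_edgeDist, ← sum_range_reflect]
    refine sum_congr rfl fun i hi => ?_
    have hi := mem_range.mp hi
    rw [edgeDist_tourReverse hsym π hi, Nat.sub_sub, Nat.cast_sub (by omega : 1 + i ≤ n)]
    push_cast
    ring
  rw [hrev, w1Cost_eq_sum_edgeDist, tspCost_eq_sum_edgeDist, mul_sum, ← sum_add_distrib]
  exact sum_congr rfl fun i _ => by ring

end Tour

theorem stmt8_general (n : ℕ) (d : Fin n → Fin n → ℝ)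
    (hsym : ∀ i j, d i j = d j i)
    (h12 : ∀ i j, d i j = 1 ∨ d i j = 2)
    (π : ℕ → Fin n)
    (π' : ℕ → Fin n) (hπ' : ∀ j, π' j = if j = 0 then π 0 else π (n - j))
    (k : ℕ) (hk : k = numTwoEdges n d π) :
    (∀ i ∈ Finset.range n, edgeDist n d π' (n - 1 - i) = edgeDist n d π i) ∧
    w1Cost n d π + w1Cost n d π' = (n : ℝ) * (n + 1) + (k : ℝ) * (n + 1) := by
  obtain rfl : π' = tourReverse n π := funext hπ'
  refine ⟨fun i hi => edgeDist_tourReverse hsym π (mem_range.mp hi), ?_⟩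
  rw [w1Cost_add_w1Cost_tourReverse hsym, tspCost_eq_add_numTwoEdges h12, hk]
  ring

/-- for symmetric {1,2}-distances, an edge at (0-indexed) position i of π
(position weight i+1) appears at position n−1−i of the reversal π' = (π_1, π_n, …, π_2)
(position weight n−i, i.e. n−r+1 for r = i+1); consequently, if π has exactly k edges of
distance 2, then W(π) + W(π') = n(n+1) + k(n+1). -/
theorem stmt8 (n : ℕ) (hn : 2 ≤ n) (d : Fin n → Fin n → ℝ)
    (hsym : ∀ i j, d i j = d j i)
    (h12 : ∀ i j, d i j = 1 ∨ d i j = 2)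
    (π : ℕ → Fin n) (hπ : IsTour n π)
    (π' : ℕ → Fin n) (hπ' : ∀ j, π' j = if j = 0 then π 0 else π (n - j))
    (k : ℕ) (hk : k = numTwoEdges n d π) :
    (∀ i ∈ Finset.range n, edgeDist n d π' (n - 1 - i) = edgeDist n d π i) ∧
    w1Cost n d π + w1Cost n d π' = (n : ℝ) * (n + 1) + (k : ℝ) * (n + 1) :=
  stmt8_general n d hsym h12 π π' hπ' k hk
end

section
/- For all real n > 0, u with 0 ≤ u ≤ n, and c ≥ 0, the ratio (n(n+1) + (cn + (1+c)u)(n+1)) / (n(n+1) + u(u+1)) is at most 1 + c + (1+c)/2 = 1.5(1+c). -/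
/-!
The numerator equals `(1 + c) * ((n + u) * (n + 1))`, so `c` factors out and it remains to bound
`(n + u)(n + 1)` by `3/2 (n(n + 1) + u(u + 1))`; twice the difference is
`(n - u)² + 2u² + n + u ≥ 0`.
-/

lemma add_mul_add_one_le_three_halves_mul {n u : ℝ} (hn : 0 ≤ n) (hu : 0 ≤ u) :
    (n + u) * (n + 1) ≤ 3 / 2 * (n * (n + 1) + u * (u + 1)) := by
  nlinarith [sq_nonneg (n - u), sq_nonneg u]

lemma add_mul_add_one_div_le_three_halves {n u : ℝ} (hn : 0 < n) (hu : 0 ≤ u) :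
    (n + u) * (n + 1) / (n * (n + 1) + u * (u + 1)) ≤ 3 / 2 := by
  have hden : 0 < n * (n + 1) + u * (u + 1) := by positivity
  rw [div_le_iff₀ hden]
  exact add_mul_add_one_le_three_halves_mul hn.le hu

theorem stmt11_general (n u c : ℝ) (hn : 0 < n) (hu0 : 0 ≤ u) (hc : 0 ≤ c) :
    (n * (n + 1) + (c * n + (1 + c) * u) * (n + 1)) / (n * (n + 1) + u * (u + 1)) ≤
      1 + c + (1 + c) / 2 ∧
    (1 : ℝ) + c + (1 + c) / 2 = 1.5 * (1 + c) := by
  have hnum : n * (n + 1) + (c * n + (1 + c) * u) * (n + 1) = (1 + c) * ((n + u) * (n + 1)) := by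
    ring
  refine ⟨?_, by norm_num; ring⟩
  calc (n * (n + 1) + (c * n + (1 + c) * u) * (n + 1)) / (n * (n + 1) + u * (u + 1))
      = (1 + c) * ((n + u) * (n + 1) / (n * (n + 1) + u * (u + 1))) := by
        rw [hnum, mul_div_assoc]
    _ ≤ (1 + c) * (3 / 2) :=
        mul_le_mul_of_nonneg_left (add_mul_add_one_div_le_three_halves hn hu0) (by linarith)
    _ = 1 + c + (1 + c) / 2 := by ring

/-- for reals n > 0, 0 ≤ u ≤ n, c ≥ 0,
(n(n+1) + (cn + (1+c)u)(n+1)) / (n(n+1) + u(u+1)) ≤ 1 + c + (1+c)/2 = 1.5(1+c). -/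
theorem stmt11 (n u c : ℝ) (hn : 0 < n) (hu0 : 0 ≤ u) (hun : u ≤ n) (hc : 0 ≤ c) :
    (n * (n + 1) + (c * n + (1 + c) * u) * (n + 1)) / (n * (n + 1) + u * (u + 1)) ≤
      1 + c + (1 + c) / 2 ∧
    (1 : ℝ) + c + (1 + c) / 2 = 1.5 * (1 + c) :=
  stmt11_general n u c hn hu0 hc
end

section
/- In the expanded instance (copies of cities with zero intra-city distances), any permutation of the original instance, when each city i is replaced by its w(i) consecutive copies, has 1-weighted TSP cost (all copies weight 1) equal to the weighted TSP cost W of the original permutation with weights w. -/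
/-- Weighted TSP cost of a tour given as a list (with default element `a`, unused
since all accessed indices are in range). -/
noncomputable def wCostList {α : Type*} (d : α → α → ℝ) (wt : α → ℝ) (a : α)
    (L : List α) : ℝ :=
  d (L.getD (L.length - 1) a) (L.getD 0 a) *
      (∑ j ∈ Finset.range L.length, wt (L.getD j a)) +
    ∑ i ∈ Finset.range (L.length - 1),
      d (L.getD i a) (L.getD (i + 1) a) *
        (∑ j ∈ Finset.range (i + 1), wt (L.getD j a))


/-!
With `d i i = 0` the distance "zero between copies of a city, `d` otherwise" is `d` itself.
Charging edges one at a time while accumulating the weight collected so far, a block of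
`w i` copies of city `i` contributes only zero-length edges and raises the accumulated
weight by `w i`, exactly as city `i` with weight `w i` does in the original tour; the
closing edge joins the same two cities and is multiplied by the same total weight.
-/

namespace List

variable {α : Type*}

theorem sum_range_getD {M : Type*} [AddCommMonoid M] (f : α → M) (a : α) :
    ∀ L : List α, ∑ j ∈ Finset.range L.length, f (L.getD j a) = (L.map f).sum
  | [] => by simp
  | x :: L => by
    rw [length_cons, Finset.sum_range_succ', map_cons, sum_cons, ← sum_range_getD f a L]
    simp only [getD_cons_succ, getD_cons_zero, add_comm]

theorem head?_flatMap_replicate (w : α → ℕ) (hw : ∀ i, 1 ≤ w i) :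
    ∀ L : List α, (L.flatMap fun i => replicate (w i) i).head? = L.head?
  | [] => rfl
  | x :: L => by
    obtain ⟨m, hm⟩ := Nat.exists_eq_add_of_le' (hw x)
    rw [flatMap_cons, hm, replicate_succ, cons_append, head?_cons, head?_cons]

theorem getLast?_flatMap_replicate (w : α → ℕ) (hw : ∀ i, 1 ≤ w i) :
    ∀ L : List α, (L.flatMap fun i => replicate (w i) i).getLast? = L.getLast?
  | [] => rfl
  | x :: L => by
    rw [flatMap_cons, getLast?_append, getLast?_flatMap_replicate w hw L, getLast?_replicate,
      if_neg (Nat.one_le_iff_ne_zero.mp (hw x)), getLast?_cons]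
    cases L.getLast? <;> rfl

theorem sum_map_flatMap_replicate {R : Type*} [Semiring R] (f : α → R) (w : α → ℕ)
    (L : List α) :
    ((L.flatMap fun i => replicate (w i) i).map f).sum = (L.map fun i => w i * f i).sum := by
  induction L with
  | nil => rfl
  | cons x L ih => simp [ih]

end List

section PathCost

variable {α : Type*} (d : α → α → ℝ) (wt : α → ℝ)

/-- Cost of the open path `L` when every edge is charged its length times the weight of
all cities visited so far, `c` being the weight collected before the path starts. -/
noncomputable def pathCost : ℝ → List α → ℝ
  | _, [] => 0
  | _, [_] => 0
  | c, x :: y :: l => d x y * (c + wt x) + pathCost (c + wt x) (y :: l)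

theorem sum_range_mul_prefix_eq_pathCost (a : α) :
    ∀ (L : List α) (c : ℝ),
      ∑ i ∈ Finset.range (L.length - 1),
          d (L.getD i a) (L.getD (i + 1) a) * (c + ∑ j ∈ Finset.range (i + 1), wt (L.getD j a)) =
        pathCost d wt c L
  | [], _ => by simp [pathCost]
  | [_], _ => by simp [pathCost]
  | x :: y :: L, c => by
    rw [pathCost, ← sum_range_mul_prefix_eq_pathCost a (y :: L) (c + wt x),
      List.length_cons, List.length_cons, Nat.add_sub_cancel, Finset.sum_range_succ', add_comm]
    congr 1
    · simp
    · refine Finset.sum_congr rfl fun i _ => ?_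
      rw [Finset.sum_range_succ' (fun j => wt ((x :: y :: L).getD j a))]
      simp only [List.getD_cons_succ, List.getD_cons_zero]
      ring

theorem wCostList_eq_pathCost (a : α) (L : List α) :
    wCostList d wt a L = d (L.getLastD a) (L.headD a) * (L.map wt).sum + pathCost d wt 0 L := by
  rw [wCostList, List.sum_range_getD, ← sum_range_mul_prefix_eq_pathCost d wt a L 0]
  simp [List.getD_eq_getElem?_getD, List.getLast?_eq_getElem?, List.head?_eq_getElem?]

theorem pathCost_replicate_append {x : α} (hx : d x x = 0) (l : List α) :
    ∀ (n : ℕ) (c : ℝ),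
      pathCost d wt c (List.replicate n x ++ x :: l) = pathCost d wt (c + n * wt x) (x :: l)
  | 0, c => by simp
  | n + 1, c => by
    have hshift : List.replicate n x ++ x :: l = x :: (List.replicate n x ++ l) := by
      rw [List.append_cons, ← List.replicate_succ', List.replicate_succ, List.cons_append]
    rw [List.replicate_succ, List.cons_append, hshift, pathCost, hx, ← hshift,
      pathCost_replicate_append hx l n (c + wt x), zero_mul, zero_add]
    congr 1
    push_cast
    ring

theorem pathCost_cons_of_head?_eq {x y : α} {l : List α} (h : l.head? = some y) (c : ℝ) :
    pathCost d wt c (x :: l) = d x y * (c + wt x) + pathCost d wt (c + wt x) l := by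
  cases l with
  | nil => simp at h
  | cons z l => rw [List.head?_cons, Option.some_inj] at h; subst h; rfl

theorem pathCost_flatMap_replicate (hd : ∀ x, d x x = 0) (w : α → ℕ) (hw : ∀ i, 1 ≤ w i) :
    ∀ (L : List α) (c : ℝ), pathCost d wt c (L.flatMap fun i => List.replicate (w i) i) =
      pathCost d (fun i => w i * wt i) c L
  | [], _ => rfl
  | x :: L, c => by
    obtain ⟨m, hm⟩ := Nat.exists_eq_add_of_le' (hw x)
    have hsplit : List.replicate (w x) x = List.replicate m x ++ [x] := by
      rw [hm, List.replicate_succ']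
    rw [List.flatMap_cons, hsplit, List.append_assoc, List.singleton_append,
      pathCost_replicate_append d wt (hd x)]
    cases hL : L.head? with
    | none => rw [List.head?_eq_none_iff.mp hL]; rfl
    | some y =>
      have hcount : c + m * wt x + wt x = c + w x * wt x := by rw [hm]; push_cast; ring
      rw [pathCost_cons_of_head?_eq d wt ((L.head?_flatMap_replicate w hw).trans hL),
        pathCost_cons_of_head?_eq _ _ hL, hcount, pathCost_flatMap_replicate hd w hw L]

theorem wCostList_flatMap_replicate (hd : ∀ x, d x x = 0) (w : α → ℕ) (hw : ∀ i, 1 ≤ w i)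
    (a : α) (L : List α) :
    wCostList d wt a (L.flatMap fun i => List.replicate (w i) i) =
      wCostList d (fun i => w i * wt i) a L := by
  rw [wCostList_eq_pathCost, wCostList_eq_pathCost, pathCost_flatMap_replicate d wt hd w hw,
    List.getLastD_eq_getLast?, List.getLastD_eq_getLast?, List.headD_eq_head?_getD,
    List.headD_eq_head?_getD, L.getLast?_flatMap_replicate w hw, L.head?_flatMap_replicate w hw,
    List.sum_map_flatMap_replicate]

end PathCost

theorem stmt14_general {α : Type*} [DecidableEq α] (d : α → α → ℝ) (w : α → ℕ)
    (hw : ∀ i, 1 ≤ w i)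
    (hself : ∀ i, d i i = 0)
    (L : List α) (a : α) :
    wCostList (fun i j => if i = j then (0 : ℝ) else d i j) (fun _ => (1 : ℝ)) a
        (L.flatMap fun i => List.replicate (w i) i) =
      wCostList d (fun i => (w i : ℝ)) a L := by
  have hd : (fun i j => if i = j then (0 : ℝ) else d i j) = d := by
    funext i j
    split_ifs with h
    · rw [h, hself]
    · rfl
  rw [hd, wCostList_flatMap_replicate d _ hself w hw]
  simp only [mul_one]

/-- replacing each city i of a tour of the original weighted instance by
its w(i) consecutive copies in the expanded instance (zero intra-city distances, unit
weights) yields a tour of the same cost: the 1-weighted TSP cost of the expanded tour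
equals the weighted TSP cost of the original tour. -/
theorem stmt14 {α : Type*} [DecidableEq α] (d : α → α → ℝ) (w : α → ℕ)
    (hw : ∀ i, 1 ≤ w i)
    (hnn : ∀ i j, 0 ≤ d i j) (hsym : ∀ i j, d i j = d j i)
    (hself : ∀ i, d i i = 0) (htri : ∀ i j k, d i k ≤ d i j + d j k)
    (L : List α) (hne : L ≠ []) (hnd : L.Nodup) (a : α) :
    wCostList (fun i j => if i = j then (0 : ℝ) else d i j) (fun _ => (1 : ℝ)) a
        (L.flatMap fun i => List.replicate (w i) i) =
      wCostList d (fun i => (w i : ℝ)) a L :=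
  stmt14_general d w hw hself L a
end

section
/- For c > 1 and 0 < d ≤ 1, with b = c^U for U uniform on [0,1], the expected total length of appended k-MST tours of costs 2bc^ℓ (summed up to ℓ = j−1 if d < b and up to ℓ = j if d ≥ b) is at most 2dc^j / ln c; formally, ∫_{log_c d}^{1} 2c^U c^j/(c−1) dU + ∫_{0}^{log_c d} 2c^U c^{j+1}/(c−1) dU = 2dc^j/ln c. -/
open Real intervalIntegral

theorem integral_const_rpow {c : ℝ} (hc₀ : 0 < c) (hc₁ : c ≠ 1) (a b : ℝ) :
    ∫ x in a..b, c ^ x = (c ^ b - c ^ a) / log c := by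
  have hlog : log c ≠ 0 := log_ne_zero_of_pos_of_ne_one hc₀ hc₁
  simp only [rpow_def_of_pos hc₀, integral_comp_mul_left exp hlog, integral_exp, smul_eq_mul]
  field_simp

theorem stmt18_general (c dv j : ℝ) (hc : 1 < c) (hd1 : 1 ≤ dv) :
    (∫ U in Real.logb c dv..(1 : ℝ), 2 * c ^ U * c ^ j / (c - 1)) +
      (∫ U in (0 : ℝ)..Real.logb c dv, 2 * c ^ U * c ^ (j + 1) / (c - 1)) =
    2 * dv * c ^ j / Real.log c := by
  have hc₀ : 0 < c := by linarith
  have hdv : c ^ logb c dv = dv := rpow_logb hc₀ hc.ne' (by linarith)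
  have hc₁ : c - 1 ≠ 0 := sub_ne_zero.mpr hc.ne'
  simp only [integral_div, integral_mul_const, integral_const_mul,
    integral_const_rpow hc₀ hc.ne', hdv, rpow_one, rpow_zero, rpow_add hc₀]
  -- c^j (c - d) + c^(j+1) (d - 1) = d c^j (c - 1): the factor c - 1 cancels.
  field_simp
  ring

/-- the expectation computation in the randomized 3.59-approximation:
for c > 1 and 1 ≤ d ≤ c (so that log_c d ∈ [0,1]),
∫_{log_c d}^{1} 2c^U·c^j/(c−1) dU + ∫_{0}^{log_c d} 2c^U·c^{j+1}/(c−1) dU = 2d·c^j/ln c. -/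
theorem stmt18 (c dv j : ℝ) (hc : 1 < c) (hd1 : 1 ≤ dv) (hdc : dv ≤ c) :
    (∫ U in Real.logb c dv..(1 : ℝ), 2 * c ^ U * c ^ j / (c - 1)) +
      (∫ U in (0 : ℝ)..Real.logb c dv, 2 * c ^ U * c ^ (j + 1) / (c - 1)) =
    2 * dv * c ^ j / Real.log c :=
  stmt18_general c dv j hc hd1
end
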